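/- Assume OCA. Suppose 𝒜 is an a.d.-family and n, k ∈ ℕ with 2 ≤ n < k. Then 𝒜 contains an n-Luzin gap if and only if 𝒜 contains a k-Luzin gap. -/

import Mathlib

open Set Filter Cardinal

noncomputable section

/-- The Banach space `ℓ∞` of bounded real sequences with the sup norm. -/
abbrev Linfty : Type := lp (fun _ : ℕ => ℝ) ⊤

/-- An a.d.-family: an uncountable family of infinite subsets of `ℕ` which is
pairwise almost disjoint. -/
def ADFamily (𝒜 : Set (Set ℕ)) : Prop :=
  ¬𝒜.Countable ∧ (∀ A ∈ 𝒜, A.Infinite) ∧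
    ∀ A ∈ 𝒜, ∀ B ∈ 𝒜, A ≠ B → (A ∩ B).Finite

/-- A maximal a.d.-family. -/
def MaximalADFamily (𝒜 : Set (Set ℕ)) : Prop :=
  ADFamily 𝒜 ∧ ∀ X : Set ℕ, X.Infinite → ∃ A ∈ 𝒜, (X ∩ A).Infinite

/-- `A =* B` : the symmetric difference is finite. -/
def eqStar (A B : Set ℕ) : Prop := (symmDiff A B).Finite

/-- Finite subfamilies `a`, `b` of `𝒜` represent the pair `p`. -/
def Represents (𝒜 : Set (Set ℕ)) (p : Set ℕ × Set ℕ) (a b : Finset (Set ℕ)) : Prop :=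
  ↑a ⊆ 𝒜 ∧ ↑b ⊆ 𝒜 ∧ eqStar p.1 (⋃ A ∈ a, A) ∧ eqStar p.2 (⋃ B ∈ b, B)

/-- `p` is a condition of the splitting partial order `ℙ_𝒜`. -/
def SplitCond (𝒜 : Set (Set ℕ)) (p : Set ℕ × Set ℕ) : Prop :=
  p.1 ∩ p.2 = ∅ ∧ ∃ a b : Finset (Set ℕ), Represents 𝒜 p a b

/-- `Extends p q` means `p ≤ q` in `ℙ_𝒜`. -/
def Extends (p q : Set ℕ × Set ℕ) : Prop := q.1 ⊆ p.1 ∧ q.2 ⊆ p.2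

/-- Compatibility in `ℙ_𝒜`. -/
def Compat (𝒜 : Set (Set ℕ)) (p q : Set ℕ × Set ℕ) : Prop :=
  ∃ r, SplitCond 𝒜 r ∧ Extends r p ∧ Extends r q

/-- An antichain of `ℙ_𝒜`: a set of pairwise incompatible conditions. -/
def SplitAntichain (𝒜 : Set (Set ℕ)) (P : Set (Set ℕ × Set ℕ)) : Prop :=
  (∀ p ∈ P, SplitCond 𝒜 p) ∧ ∀ p ∈ P, ∀ q ∈ P, p ≠ q → ¬Compat 𝒜 p q

/-- `ℙ_𝒜` satisfies the countable chain condition. -/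
def SplitCCC (𝒜 : Set (Set ℕ)) : Prop :=
  ∀ P : Set (Set ℕ × Set ℕ), SplitAntichain 𝒜 P → P.Countable

/-- A centered subset of `ℙ_𝒜`: every finite subset has a common lower bound in `ℙ_𝒜`. -/
def SplitCentered (𝒜 : Set (Set ℕ)) (P : Set (Set ℕ × Set ℕ)) : Prop :=
  ∀ F : Finset (Set ℕ × Set ℕ), ↑F ⊆ P →
    ∃ r, SplitCond 𝒜 r ∧ ∀ p ∈ F, Extends r p

/-- `ℙ_𝒜` is σ-centered. -/
def SplitSigmaCentered (𝒜 : Set (Set ℕ)) : Prop :=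
  ∃ P : ℕ → Set (Set ℕ × Set ℕ),
    (⋃ n, P n) = {p | SplitCond 𝒜 p} ∧ ∀ n, SplitCentered 𝒜 (P n)

/-- `ℙ_𝒜` has precaliber `κ`. -/
def SplitPrecaliber (𝒜 : Set (Set ℕ)) (κ : Cardinal) : Prop :=
  ∀ P : Set (Set ℕ × Set ℕ), (∀ p ∈ P, SplitCond 𝒜 p) → #P = κ →
    ∃ Q ⊆ P, #Q = κ ∧ SplitCentered 𝒜 Q

/-- Two conditions are essentially distinct if their (uniquely determined)
representing finite subfamilies differ on both coordinates. -/
def EssDistinct (𝒜 : Set (Set ℕ)) (p q : Set ℕ × Set ℕ) : Prop :=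
  ∀ ap bp aq bq : Finset (Set ℕ), Represents 𝒜 p ap bp → Represents 𝒜 q aq bq →
    ap ≠ aq ∧ bp ≠ bq

/-- An antiramsey a.d.-family. -/
def Antiramsey (𝒜 : Set (Set ℕ)) : Prop :=
  ADFamily 𝒜 ∧
  ∀ P : Set (Set ℕ × Set ℕ), (∀ p ∈ P, SplitCond 𝒜 p) → ¬P.Countable →
    (∀ p ∈ P, ∀ q ∈ P, p ≠ q → EssDistinct 𝒜 p q) →
    (∃ p ∈ P, ∃ q ∈ P, p ≠ q ∧ Compat 𝒜 p q) ∧ (∃ p ∈ P, ∃ q ∈ P, ¬Compat 𝒜 p q)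

/-- The first uncountable ordinal. -/
def omega1 : Ordinal.{0} := (Cardinal.aleph 1).ord

/-- A Luzin family. -/
def IsLuzinFamily (𝒜 : Set (Set ℕ)) : Prop :=
  ADFamily 𝒜 ∧ ∃ A : Ordinal.{0} → Set ℕ,
    (∀ ξ < omega1, A ξ ∈ 𝒜) ∧
    (∀ B ∈ 𝒜, ∃ ξ < omega1, A ξ = B) ∧
    (∀ ξ < omega1, ∀ η < omega1, ξ ≠ η → A ξ ≠ A η) ∧
    ∀ η < omega1, ∀ m : ℕ, {ξ : Ordinal | ξ < η ∧ sSup (A ξ ∩ A η) = m}.Finite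

/-- `(B i : i < n)` forms an `n`-Luzin gap. -/
def IsNLuzinGap (n : ℕ) (B : Fin n → Ordinal.{0} → Set ℕ) : Prop :=
  (∀ i : Fin n, ∀ α < omega1, ∀ β < omega1, α ≠ β → B i α ≠ B i β) ∧
  (∀ i j : Fin n, i ≠ j → ∀ α < omega1, ∀ β < omega1, B i α ≠ B j β) ∧
  ∃ m : ℕ,
    (∀ i j : Fin n, i < j → ∀ α < omega1, B i α ∩ B j α ⊆ Set.Iio m) ∧
    (∀ α < omega1, ∀ β < omega1, α ≠ β →
      ¬(⋃ (i : Fin n) (j : Fin n) (_ : i ≠ j), B i α ∩ B j β) ⊆ Set.Iio m)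

/-- `𝒜` contains an `n`-Luzin gap. -/
def ContainsNLuzinGap (𝒜 : Set (Set ℕ)) (n : ℕ) : Prop :=
  ∃ B : Fin n → Ordinal.{0} → Set ℕ,
    (∀ i : Fin n, ∀ α < omega1, B i α ∈ 𝒜) ∧ IsNLuzinGap n B

-- The characteristic function of `A ⊆ ℕ` as an element of `ℓ∞`.
open Classical in
def indicatorLinfty (A : Set ℕ) : Linfty :=
  ⟨fun n => if n ∈ A then (1 : ℝ) else 0, by
    apply memℓp_infty
    refine ⟨1, ?_⟩
    rintro x ⟨n, rfl⟩
    dsimp only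
    split <;> simp⟩

/-- The subset `c₀` of `ℓ∞`. -/
def c0Set : Set Linfty := {f | Tendsto (fun n => f n) atTop (nhds 0)}

/-- The Johnson–Lindenstrauss space `X_𝒜`: the closed linear span of
`c₀ ∪ {1_A : A ∈ 𝒜}` in `ℓ∞`, as a (closed) submodule. -/
def XA (𝒜 : Set (Set ℕ)) : Submodule ℝ Linfty :=
  (Submodule.span ℝ (c0Set ∪ indicatorLinfty '' 𝒜)).topologicalClosure

/-- The norm `‖·‖_{∞,2}` on `ℓ∞`. -/
def norm12 (f : Linfty) : ℝ :=
  ‖f‖ + Real.sqrt (∑' n : ℕ, (f n) ^ 2 / 2 ^ (n + 1))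

/-- The unit sphere of `(X_𝒜, ‖·‖∞)`. -/
def sphereInf (𝒜 : Set (Set ℕ)) : Set Linfty :=
  {f : Linfty | f ∈ XA 𝒜 ∧ ‖f‖ = 1}

/-- The unit sphere of `(X_𝒜, ‖·‖_{∞,2})`. -/
def sphere12 (𝒜 : Set (Set ℕ)) : Set Linfty :=
  {f : Linfty | f ∈ XA 𝒜 ∧ norm12 f = 1}

/-- The Open Coloring Axiom. -/
def OCA : Prop :=
  ∀ (X : Type) [MetricSpace X], TopologicalSpace.SeparableSpace X →
    ∀ K : Set (X × X), IsOpen K → (∀ x y : X, (x, y) ∈ K → (y, x) ∈ K) →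
      (∃ Y : Set X, ¬Y.Countable ∧ ∀ x ∈ Y, ∀ y ∈ Y, x ≠ y → (x, y) ∈ K) ∨
      (∃ C : ℕ → Set X, (⋃ n, C n) = Set.univ ∧
        ∀ n, ∀ x ∈ C n, ∀ y ∈ C n, x ≠ y → (x, y) ∉ K)

/-- An `ℝ`-embeddable a.d.-family. -/
def REmbeddable (𝒜 : Set (Set ℕ)) : Prop :=
  ∃ (f : ℕ → ℚ) (r : Set ℕ → ℝ), Function.Injective f ∧
    (∀ A ∈ 𝒜, Irrational (r A) ∧
      ∀ ε : ℝ, 0 < ε → {n ∈ A | ε ≤ |(f n : ℝ) - r A|}.Finite) ∧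
    (∀ A ∈ 𝒜, ∀ B ∈ 𝒜, A ≠ B → r A ≠ r B)

/-- The Continuum Hypothesis. -/
def CH : Prop := (Cardinal.continuum : Cardinal.{0}) = Cardinal.aleph 1

end

/-!
Write a gap as a family of sets `B i ξ`, column `i` of row `ξ`, with rows indexed by an uncountable
set. Coding a row by the characteristic functions of its sets, "column `i` of row `ξ` and column
`j` of row `η` meet above `m`" becomes an open symmetric relation on a second countable metrizable
space, so OCA applies to it.

Going down from `k` to `n`: the gap condition covers every pair of indices by one of the finitely
many colours `(i, j)`, and iterating OCA yields an uncountable set of rows on which one fixed pair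
of columns `i ≠ j` already meets above `m`; any `n` columns containing `i` and `j` form an `n`-gap.

Going up from `n` to `k`: add `k - n` columns taken from the gap at fresh indices. After thinning
out so that the bound `M` on the overlaps within a row and the traces of the rows below `M` are
constant, OCA gives an uncountable set on which distinct columns of distinct rows always meet
above `M`, which is a `k`-gap, or one on which they never do. The latter is impossible: two rows
of the old gap meet above `m` in distinct columns, and with equal traces below `M` such a meet
below `M` would lie inside a single row.
-/

open TopologicalSpace

universe u v

theorem exists_mapsTo_injOn_of_lift_mk_le {α : Type u} {ι : Type v} {A : Set α} {S : Set ι}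
    (h : lift.{v} #A ≤ lift.{u} #S) (hS : S.Nonempty) :
    ∃ e : α → ι, Set.MapsTo e A S ∧ Set.InjOn e A := by
  classical
  obtain ⟨f⟩ := lift_mk_le'.mp h
  obtain ⟨x₀, hx₀⟩ := hS
  refine ⟨fun a => if ha : a ∈ A then f ⟨a, ha⟩ else x₀, fun a ha => by simp [ha], ?_⟩
  intro a ha b hb hab
  simpa [ha, hb, Subtype.val_inj, f.injective.eq_iff] using hab

theorem exists_mapsTo_Iio_omega1_injOn {ι : Type u} {S : Set ι} (hS : ¬S.Countable) :
    ∃ e : Ordinal.{0} → ι, Set.MapsTo e (Iio omega1) S ∧ Set.InjOn e (Iio omega1) := by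
  refine exists_mapsTo_injOn_of_lift_mk_le ?_ (Set.Infinite.nonempty fun h => hS h.countable)
  rw [Cardinal.mk_Iio_ordinal, omega1, Cardinal.card_ord, lift_lift, lift_aleph, Ordinal.lift_one,
    aleph_one_le_iff, aleph0_lt_lift]
  exact lt_of_not_ge (le_aleph0_iff_set_countable.not.mpr hS)

theorem Set.Infinite.exists_mapsTo_prod_injOn {ι : Type u} {S : Set ι} (hS : S.Infinite)
    (κ : Type) [Finite κ] :
    ∃ g : ι × κ → ι, Set.MapsTo g (S ×ˢ univ) S ∧ Set.InjOn g (S ×ˢ univ) := by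
  refine exists_mapsTo_injOn_of_lift_mk_le ?_ hS.nonempty
  have hS₀ : ℵ₀ ≤ #S := infinite_iff.mp hS.to_subtype
  have hκ : lift.{u} #(univ : Set κ) ≤ #S := (lt_aleph0_of_finite _).le.trans hS₀
  rw [Cardinal.lift_le, mk_congr (Equiv.Set.prod S univ), mk_prod, lift_uzero]
  exact (mul_le_max_of_aleph0_le_left hS₀).trans (max_le le_rfl hκ)

theorem not_countable_Iio_omega1 : ¬(Iio omega1).Countable := by
  rw [← le_aleph0_iff_set_countable, Cardinal.mk_Iio_ordinal, omega1, Cardinal.card_ord,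
    lift_aleph, Ordinal.lift_one, not_le]
  exact aleph0_lt_aleph_one

theorem exists_not_countable_inter_preimage_singleton {ι β : Type*} [Countable β] {S : Set ι}
    (hS : ¬S.Countable) (f : ι → β) : ∃ b, ¬(S ∩ f ⁻¹' {b}).Countable := by
  by_contra! h
  refine hS (Set.Countable.mono (fun ξ hξ => ?_) (Set.countable_iUnion h))
  exact Set.mem_iUnion.mpr ⟨f ξ, hξ, rfl⟩

theorem exists_inter_subset_Iio {κ : Type*} [Finite κ] (A : κ → Set ℕ)
    (hA : ∀ i j, i ≠ j → (A i ∩ A j).Finite) :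
    ∃ M, ∀ i j, i ≠ j → A i ∩ A j ⊆ Iio M := by
  have hfin : (⋃ (i) (j) (_ : i ≠ j), A i ∩ A j).Finite :=
    Set.finite_iUnion fun i => Set.finite_iUnion fun j => Set.finite_iUnion (hA i j)
  obtain ⟨M, hM⟩ := hfin.bddAbove
  refine ⟨M + 1, fun i j hij t ht => Nat.lt_succ_of_le (hM ?_)⟩
  exact Set.mem_iUnion₂.mpr ⟨i, j, Set.mem_iUnion.mpr ⟨hij, ht⟩⟩

theorem exists_not_countable_forall_lt_mem_iff {κ ι : Type*} [Finite κ] {S : Set ι}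
    (hS : ¬S.Countable) (B : κ → ι → Set ℕ) (M : ι → ℕ) :
    ∃ M₀, ∃ T ⊆ S, ¬T.Countable ∧ (∀ ξ ∈ T, M ξ = M₀) ∧
      ∀ ξ ∈ T, ∀ η ∈ T, ∀ i, ∀ t < M₀, t ∈ B i ξ ↔ t ∈ B i η := by
  classical
  obtain ⟨⟨M₀, τ⟩, hT⟩ := exists_not_countable_inter_preimage_singleton hS
    fun ξ => (M ξ, fun i => (Finset.range (M ξ)).filter (· ∈ B i ξ))
  refine ⟨M₀, _, Set.inter_subset_left, hT, fun ξ hξ => congrArg Prod.fst hξ.2, ?_⟩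
  rintro ξ ⟨-, hξ⟩ η ⟨-, hη⟩ i t ht
  simp only [Set.mem_preimage, Set.mem_singleton_iff, Prod.mk.injEq] at hξ hη
  obtain ⟨rfl, hξτ⟩ := hξ
  obtain ⟨hMη, hητ⟩ := hη
  have hτ := Finset.ext_iff.mp (congrFun (hξτ.trans hητ.symm) i) t
  simpa [ht, hMη ▸ ht] using hτ

theorem OCA.exists_uncountable_pairwise (hOCA : OCA) {X : Type} [TopologicalSpace X]
    [MetrizableSpace X] [SecondCountableTopology X] {K : Set (X × X)} (hK : IsOpen K)
    (hKsymm : ∀ x y, (x, y) ∈ K → (y, x) ∈ K) {Y : Set X} (hY : ¬Y.Countable) :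
    ∃ T ⊆ Y, ¬T.Countable ∧
      ((T.Pairwise fun x y => (x, y) ∈ K) ∨ T.Pairwise fun x y => (x, y) ∉ K) := by
  let := metrizableSpaceMetric X
  have hval : Function.Injective ((↑) : Y → X) := Subtype.val_injective
  have hK' : IsOpen (Prod.map (↑) (↑) ⁻¹' K : Set (Y × Y)) :=
    hK.preimage (by fun_prop)
  rcases hOCA Y inferInstance _ hK' (fun x y => hKsymm x y) with ⟨Z, hZ, hZK⟩ | ⟨C, hC, hCK⟩
  · refine ⟨(↑) '' Z, by simp,
      fun h => hZ (Set.countable_of_injective_of_countable_image hval.injOn h), Or.inl ?_⟩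
    exact hval.injOn.pairwise_image.mpr hZK
  · obtain ⟨i, hi⟩ : ∃ i, ¬(C i).Countable := by
      by_contra! h
      exact hY <| Set.countable_coe_iff.mp <|
        Set.countable_univ_iff.mp (hC ▸ Set.countable_iUnion h)
    refine ⟨(↑) '' C i, by simp,
      fun h => hi (Set.countable_of_injective_of_countable_image hval.injOn h), Or.inr ?_⟩
    exact hval.injOn.pairwise_image.mpr (hCK i)

def MeetsAbove (m : ℕ) (A B : Set ℕ) : Prop := ∃ t, m ≤ t ∧ t ∈ A ∧ t ∈ B

theorem isOpen_setOf_exists_meetsAbove_code {κ : Type*} (P : Set (κ × κ)) (m : ℕ) :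
    IsOpen {x : (κ → ℕ → Bool) × (κ → ℕ → Bool) |
      ∃ p ∈ P, ∃ t, m ≤ t ∧ x.1 p.1 t = true ∧ x.2 p.2 t = true} := by
  rw [isOpen_iff_mem_nhds]
  rintro x ⟨p, hp, t, hmt, hx⟩
  have hopen : IsOpen {y : (κ → ℕ → Bool) × (κ → ℕ → Bool) |
      y.1 p.1 t = true ∧ y.2 p.2 t = true} :=
    ((isOpen_discrete {true}).preimage (by fun_prop)).inter
      ((isOpen_discrete {true}).preimage (by fun_prop))
  filter_upwards [hopen.mem_nhds hx] with y hy using ⟨p, hp, t, hmt, hy⟩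

theorem OCA.exists_uncountable_pairwise_comp (hOCA : OCA) {X : Type} [TopologicalSpace X]
    [MetrizableSpace X] [SecondCountableTopology X] {K : Set (X × X)} (hK : IsOpen K)
    (hKsymm : ∀ x y, (x, y) ∈ K → (y, x) ∈ K) {ι : Type*} {c : ι → X} {S : Set ι}
    (hS : ¬S.Countable) (hc : S.InjOn c) :
    ∃ T ⊆ S, ¬T.Countable ∧
      ((T.Pairwise fun ξ η => (c ξ, c η) ∈ K) ∨ T.Pairwise fun ξ η => (c ξ, c η) ∉ K) := by
  obtain ⟨T', hT'S, hT', hT'K⟩ := hOCA.exists_uncountable_pairwise hK hKsymm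
    (Y := c '' S) fun h => hS (Set.countable_of_injective_of_countable_image hc h)
  have hcT : c '' (S ∩ c ⁻¹' T') = T' := by
    rw [Set.image_inter_preimage, Set.inter_eq_right.mpr hT'S]
  have hinj : (S ∩ c ⁻¹' T').InjOn c := hc.mono Set.inter_subset_left
  refine ⟨S ∩ c ⁻¹' T', Set.inter_subset_left, fun h => hT' (hcT ▸ h.image c), ?_⟩
  rw [← hcT, hinj.pairwise_image, hinj.pairwise_image] at hT'K
  exact hT'K

theorem OCA.exists_uncountable_pairwise_meetsAbove (hOCA : OCA) {κ : Type} [Countable κ]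
    {ι : Type*} {B : κ → ι → Set ℕ} {S : Set ι} (hS : ¬S.Countable)
    (hB : S.InjOn fun ξ i => B i ξ) {P : Set (κ × κ)} (hP : ∀ p ∈ P, p.swap ∈ P) (m : ℕ) :
    ∃ T ⊆ S, ¬T.Countable ∧
      ((T.Pairwise fun ξ η => ∃ p ∈ P, MeetsAbove m (B p.1 ξ) (B p.2 η)) ∨
        T.Pairwise fun ξ η => ¬∃ p ∈ P, MeetsAbove m (B p.1 ξ) (B p.2 η)) := by
  classical
  set code : ι → κ → ℕ → Bool := fun ξ i t => decide (t ∈ B i ξ)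
  have hcode : S.InjOn code := fun ξ hξ η hη h => hB hξ hη <| by
    funext i; ext t; simpa [code] using congrFun (congrFun h i) t
  have hsymm : ∀ x y : (κ → ℕ → Bool),
      (∃ p ∈ P, ∃ t, m ≤ t ∧ x p.1 t = true ∧ y p.2 t = true) →
        ∃ p ∈ P, ∃ t, m ≤ t ∧ y p.1 t = true ∧ x p.2 t = true := by
    rintro x y ⟨p, hp, t, hmt, hx, hy⟩
    exact ⟨p.swap, hP p hp, t, hmt, hy, hx⟩
  simpa [code, MeetsAbove] using hOCA.exists_uncountable_pairwise_comp
    (isOpen_setOf_exists_meetsAbove_code P m) hsymm hS hcode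

theorem OCA.exists_uncountable_pairwise_meetsAbove_of_cover (hOCA : OCA) {κ : Type}
    [Countable κ] {ι σ : Type*} {B : κ → ι → Set ℕ} {S : Set ι} (hS : ¬S.Countable)
    (hB : S.InjOn fun ξ i => B i ξ) {P : σ → Set (κ × κ)} (hP : ∀ l, ∀ p ∈ P l, p.swap ∈ P l)
    (m : ℕ) (L : Finset σ)
    (hcover : S.Pairwise fun ξ η => ∃ l ∈ L, ∃ p ∈ P l, MeetsAbove m (B p.1 ξ) (B p.2 η)) :
    ∃ l ∈ L, ∃ T ⊆ S, ¬T.Countable ∧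
      T.Pairwise fun ξ η => ∃ p ∈ P l, MeetsAbove m (B p.1 ξ) (B p.2 η) := by
  classical
  induction L using Finset.induction_on generalizing S with
  | empty =>
    refine absurd (Set.Subsingleton.countable fun ξ hξ η hη => ?_) hS
    by_contra hne
    simpa using hcover hξ hη hne
  | insert l L _ ih =>
    obtain ⟨T, hTS, hT, hhom | hfree⟩ :=
      hOCA.exists_uncountable_pairwise_meetsAbove hS hB (hP l) m
    · exact ⟨l, Finset.mem_insert_self l L, T, hTS, hT, hhom⟩
    have hcoverT :
        T.Pairwise fun ξ η => ∃ l ∈ L, ∃ p ∈ P l, MeetsAbove m (B p.1 ξ) (B p.2 η) := by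
      intro ξ hξ η hη hne
      obtain ⟨l', hl', hmeets⟩ := hcover (hTS hξ) (hTS hη) hne
      rcases Finset.mem_insert.mp hl' with rfl | hl'
      · exact absurd hmeets (hfree hξ hη hne)
      · exact ⟨l', hl', hmeets⟩
    obtain ⟨l', hl', T', hT'T, hT'⟩ := ih hT (hB.mono hTS) hcoverT
    exact ⟨l', Finset.mem_insert_of_mem hl', T', hT'T.trans hTS, hT'⟩

/-- `IsNLuzinGap` with rows indexed by an arbitrary set `S` and columns by an arbitrary type `κ`. -/
structure IsLuzinGapOn {κ ι : Type*} (B : κ → ι → Set ℕ) (S : Set ι) (m : ℕ) : Prop where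
  eq_of_eq : ∀ i j, ∀ ξ ∈ S, ∀ η ∈ S, B i ξ = B j η → i = j ∧ ξ = η
  inter_subset_Iio : ∀ ξ ∈ S, ∀ i j, i ≠ j → B i ξ ∩ B j ξ ⊆ Iio m
  meetsAbove : S.Pairwise fun ξ η => ∃ i j, i ≠ j ∧ MeetsAbove m (B i ξ) (B j η)

namespace IsLuzinGapOn

variable {κ ι : Type*} {B : κ → ι → Set ℕ} {S : Set ι} {m : ℕ}

theorem injOn_columns (h : IsLuzinGapOn B S m) : S.InjOn fun ξ i => B i ξ := by
  intro ξ hξ η hη hcol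
  by_contra hne
  obtain ⟨i, -, -, -⟩ := h.meetsAbove hξ hη hne
  exact hne (h.eq_of_eq i i ξ hξ η hη (congrFun hcol i)).2

theorem exists_meetsAbove_of_forall_lt_mem_iff {M : ℕ} (h : IsLuzinGapOn B S m) {ξ η : ι}
    (hξ : ξ ∈ S) (hη : η ∈ S) (hne : ξ ≠ η) (htrace : ∀ i, ∀ t < M, t ∈ B i ξ ↔ t ∈ B i η) :
    ∃ i j, i ≠ j ∧ MeetsAbove M (B i ξ) (B j η) := by
  obtain ⟨i, j, hij, t, hmt, hti, htj⟩ := h.meetsAbove hξ hη hne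
  refine ⟨i, j, hij, t, not_lt.mp fun htM => ?_, hti, htj⟩
  have htη : t ∈ B i η ∩ B j η := ⟨(htrace i t htM).mp hti, htj⟩
  exact absurd (h.inter_subset_Iio η hη i j hij htη) (not_lt.mpr hmt)

theorem comp_of_pairwise {κ' : Type*} {T : Set ι} (h : IsLuzinGapOn B S m) {c : κ' → κ}
    (hc : c.Injective) (hTS : T ⊆ S) {i j : κ'} (hij : i ≠ j)
    (hT : T.Pairwise fun ξ η => MeetsAbove m (B (c i) ξ) (B (c j) η) ∨
      MeetsAbove m (B (c j) ξ) (B (c i) η)) :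
    IsLuzinGapOn (fun l => B (c l)) T m where
  eq_of_eq _ _ ξ hξ η hη hEq := (h.eq_of_eq _ _ ξ (hTS hξ) η (hTS hη) hEq).imp_left (@hc _ _)
  inter_subset_Iio ξ hξ _ _ hne := h.inter_subset_Iio ξ (hTS hξ) _ _ (hc.ne hne)
  meetsAbove := hT.imp fun _ _ hmeets => hmeets.elim (⟨i, j, hij, ·⟩) (⟨j, i, hij.symm, ·⟩)

end IsLuzinGapOn

theorem ContainsNLuzinGap.exists_isLuzinGapOn {𝒜 : Set (Set ℕ)} {n : ℕ}
    (h : ContainsNLuzinGap 𝒜 n) :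
    ∃ (B : Fin n → Ordinal.{0} → Set ℕ) (m : ℕ),
      (∀ i, ∀ ξ ∈ Iio omega1, B i ξ ∈ 𝒜) ∧ IsLuzinGapOn B (Iio omega1) m := by
  obtain ⟨B, hB𝒜, hinj, hdisj, m, hinter, hmeets⟩ := h
  refine ⟨B, m, hB𝒜, ⟨fun i j ξ hξ η hη heq => ?_, fun ξ hξ i j hij => ?_, ?_⟩⟩
  · by_cases hij : i = j
    · subst hij
      exact ⟨rfl, by_contra fun hne => hinj i ξ hξ η hη hne heq⟩
    · exact absurd heq (hdisj i j hij ξ hξ η hη)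
  · rcases hij.lt_or_gt with hij | hji
    · exact hinter i j hij ξ hξ
    · exact Set.inter_comm _ _ ▸ hinter j i hji ξ hξ
  · intro ξ hξ η hη hne
    obtain ⟨t, ht, htm⟩ := Set.not_subset.mp (hmeets ξ hξ η hη hne)
    simp only [Set.mem_iUnion, Set.mem_inter_iff] at ht
    obtain ⟨i, j, hij, hti, htj⟩ := ht
    exact ⟨i, j, hij, t, not_lt.mp htm, hti, htj⟩

theorem containsNLuzinGap_of_isLuzinGapOn {𝒜 : Set (Set ℕ)} {n : ℕ} {ι : Type*}
    {B : Fin n → ι → Set ℕ} {S : Set ι} {m : ℕ} (hS : ¬S.Countable)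
    (hB𝒜 : ∀ i, ∀ ξ ∈ S, B i ξ ∈ 𝒜) (h : IsLuzinGapOn B S m) : ContainsNLuzinGap 𝒜 n := by
  obtain ⟨e, heS, heinj⟩ := exists_mapsTo_Iio_omega1_injOn hS
  refine ⟨fun i α => B i (e α), fun i α hα => hB𝒜 i _ (heS hα), fun i α hα β hβ hne hEq => ?_,
    fun i j hij α hα β hβ hEq => ?_, m, fun i j hij α hα => ?_, fun α hα β hβ hne => ?_⟩
  · exact hne (heinj hα hβ (h.eq_of_eq i i _ (heS hα) _ (heS hβ) hEq).2)
  · exact hij (h.eq_of_eq i j _ (heS hα) _ (heS hβ) hEq).1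
  · exact h.inter_subset_Iio _ (heS hα) i j hij.ne
  · obtain ⟨i, j, hij, t, hmt, hti, htj⟩ :=
      h.meetsAbove (heS hα) (heS hβ) fun hEq => hne (heinj hα hβ hEq)
    refine Set.not_subset.mpr ⟨t, ?_, not_lt.mpr hmt⟩
    simp only [Set.mem_iUnion, Set.mem_inter_iff]
    exact ⟨i, j, hij, hti, htj⟩

theorem exists_extend_columns {n k : ℕ} {ι : Type*} {B : Fin n → ι → Set ℕ} {S : Set ι}
    (hB : ∀ i j, ∀ ξ ∈ S, ∀ η ∈ S, B i ξ = B j η → i = j ∧ ξ = η) (hS : S.Infinite)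
    (hn : 0 < n) (hnk : n ≤ k) :
    ∃ (D : Fin k → ι → Set ℕ) (a : ι → ι), (∀ i, ∀ ξ ∈ S, ∃ j, ∃ ζ ∈ S, D i ξ = B j ζ) ∧
      (∀ i j, ∀ ξ ∈ S, ∀ η ∈ S, D i ξ = D j η → i = j ∧ ξ = η) ∧
      Set.MapsTo a S S ∧ Set.InjOn a S ∧ ∀ i ξ, D (Fin.castLE hnk i) ξ = B i (a ξ) := by
  obtain ⟨g, hgS, hginj⟩ := hS.exists_mapsTo_prod_injOn (Fin k)
  have hgS' : ∀ ξ ∈ S, ∀ s, g (ξ, s) ∈ S := fun ξ hξ s => hgS (Set.mk_mem_prod hξ trivial)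
  -- column `i` of the new family is column `i % n` of `B` at the fresh index `g (ξ, i / n)`
  set w : Fin k → Fin k × Fin n :=
    fun i => finProdFinEquiv.symm (Fin.castLE (Nat.le_mul_of_pos_right k hn) i)
  have hw : w.Injective := finProdFinEquiv.symm.injective.comp (Fin.castLE_injective _)
  have hw_castLE : ∀ i : Fin n, w (Fin.castLE hnk i) = (⟨0, hn.trans_le hnk⟩, i) := fun i =>
    finProdFinEquiv.symm_apply_eq.mpr (Fin.ext (by simp [finProdFinEquiv]))
  refine ⟨fun i ξ => B (w i).2 (g (ξ, (w i).1)), fun ξ => g (ξ, ⟨0, hn.trans_le hnk⟩),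
    fun i ξ hξ => ⟨_, _, hgS' ξ hξ _, rfl⟩, fun i j ξ hξ η hη hEq => ?_,
    fun ξ hξ => hgS' ξ hξ _, fun ξ hξ η hη hEq => ?_, fun i ξ => by simp only [hw_castLE]⟩
  · obtain ⟨hcol, hidx⟩ := hB _ _ _ (hgS' ξ hξ _) _ (hgS' η hη _) hEq
    obtain ⟨hξη, hrow⟩ := Prod.ext_iff.mp
      (hginj (Set.mk_mem_prod hξ trivial) (Set.mk_mem_prod hη trivial) hidx)
    exact ⟨hw (Prod.ext hrow hcol), hξη⟩
  · exact congrArg Prod.fst (hginj (Set.mk_mem_prod hξ trivial) (Set.mk_mem_prod hη trivial) hEq)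

theorem IsLuzinGapOn.exists_isLuzinGapOn_of_le (hOCA : OCA) {𝒜 : Set (Set ℕ)}
    (h𝒜 : 𝒜.Pairwise fun A B => (A ∩ B).Finite) {n k : ℕ} {ι : Type*} {B : Fin n → ι → Set ℕ}
    {S : Set ι} {m : ℕ} (h : IsLuzinGapOn B S m) (hS : ¬S.Countable)
    (hB𝒜 : ∀ i, ∀ ξ ∈ S, B i ξ ∈ 𝒜) (hnk : n ≤ k) :
    ∃ (D : Fin k → ι → Set ℕ) (T : Set ι) (M : ℕ),
      ¬T.Countable ∧ (∀ i, ∀ ξ ∈ T, D i ξ ∈ 𝒜) ∧ IsLuzinGapOn D T M := by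
  obtain ⟨ξ₀, hξ₀, η₀, hη₀, hne₀⟩ := Set.not_subsingleton_iff.mp fun h' => hS h'.countable
  obtain ⟨i₀, -⟩ := h.meetsAbove hξ₀ hη₀ hne₀
  have hn : 0 < n := i₀.pos
  obtain ⟨D, a, hDB, hDinj, haS, hainj, hDa⟩ :=
    exists_extend_columns h.eq_of_eq (fun h' => hS h'.countable) hn hnk
  have hD𝒜 : ∀ i, ∀ ξ ∈ S, D i ξ ∈ 𝒜 := fun i ξ hξ => by
    obtain ⟨j, ζ, hζ, hEq⟩ := hDB i ξ hξ
    exact hEq ▸ hB𝒜 j ζ hζ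
  have hM : ∀ ξ ∈ S, ∃ M, ∀ i j, i ≠ j → D i ξ ∩ D j ξ ⊆ Iio M := fun ξ hξ =>
    exists_inter_subset_Iio _ fun i j hij =>
      h𝒜 (hD𝒜 i ξ hξ) (hD𝒜 j ξ hξ) fun hEq => hij (hDinj i j ξ hξ ξ hξ hEq).1
  choose! M hM using hM
  obtain ⟨M₀, S₁, hS₁S, hS₁, hMS₁, htrace⟩ :=
    exists_not_countable_forall_lt_mem_iff hS (fun i ξ => B i (a ξ)) M
  have hDinj₁ : S₁.InjOn fun ξ i => D i ξ := fun ξ hξ η hη hEq =>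
    (hDinj ⟨0, hn.trans_le hnk⟩ _ ξ (hS₁S hξ) η (hS₁S hη) (congrFun hEq _)).2
  obtain ⟨T, hTS₁, hT, hhom | hfree⟩ := hOCA.exists_uncountable_pairwise_meetsAbove hS₁ hDinj₁
    (P := {p | p.1 ≠ p.2}) (fun p hp => Ne.symm hp) M₀
  · refine ⟨D, T, M₀, hT, fun i ξ hξ => hD𝒜 i ξ (hS₁S (hTS₁ hξ)), ⟨?_, ?_, ?_⟩⟩
    · exact fun i j ξ hξ η hη => hDinj i j ξ (hS₁S (hTS₁ hξ)) η (hS₁S (hTS₁ hη))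
    · exact fun ξ hξ => hMS₁ ξ (hTS₁ hξ) ▸ hM ξ (hS₁S (hTS₁ hξ))
    · exact hhom.imp fun ξ η ⟨p, hp, hmeets⟩ => ⟨p.1, p.2, hp, hmeets⟩
  -- with equal traces below `M₀`, the old gap makes two rows in `T` meet above `M₀`
  exfalso
  obtain ⟨ξ, hξ, η, hη, hne⟩ := Set.not_subsingleton_iff.mp fun h' => hT h'.countable
  have hξS := hS₁S (hTS₁ hξ)
  have hηS := hS₁S (hTS₁ hη)
  obtain ⟨i, j, hij, hmeets⟩ := h.exists_meetsAbove_of_forall_lt_mem_iff (haS hξS) (haS hηS)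
    (fun hEq => hne (hainj hξS hηS hEq)) (htrace ξ (hTS₁ hξ) η (hTS₁ hη))
  refine hfree hξ hη hne ⟨(Fin.castLE hnk i, Fin.castLE hnk j), ?_, ?_⟩
  · exact fun hEq => hij (Fin.castLE_injective hnk hEq)
  · simpa only [hDa] using hmeets

theorem ContainsNLuzinGap.of_le (hOCA : OCA) {𝒜 : Set (Set ℕ)} (h𝒜 : ADFamily 𝒜) {n k : ℕ}
    (h : ContainsNLuzinGap 𝒜 n) (hnk : n ≤ k) : ContainsNLuzinGap 𝒜 k := by
  obtain ⟨B, m, hB𝒜, hgap⟩ := h.exists_isLuzinGapOn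
  obtain ⟨D, T, M, hT, hD𝒜, hDgap⟩ := hgap.exists_isLuzinGapOn_of_le hOCA
    (fun A hA B hB => h𝒜.2.2 A hA B hB) not_countable_Iio_omega1 hB𝒜 hnk
  exact containsNLuzinGap_of_isLuzinGapOn hT hD𝒜 hDgap

theorem IsLuzinGapOn.exists_pair_pairwise_meetsAbove (hOCA : OCA) {κ : Type} [Fintype κ]
    {ι : Type*} {B : κ → ι → Set ℕ} {S : Set ι} {m : ℕ} (h : IsLuzinGapOn B S m)
    (hS : ¬S.Countable) :
    ∃ i j, i ≠ j ∧ ∃ T ⊆ S, ¬T.Countable ∧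
      T.Pairwise fun ξ η => MeetsAbove m (B i ξ) (B j η) ∨ MeetsAbove m (B j ξ) (B i η) := by
  classical
  obtain ⟨l, hl, T, hTS, hT, hmeets⟩ := hOCA.exists_uncountable_pairwise_meetsAbove_of_cover hS
    h.injOn_columns (P := fun l => {l, l.swap}) (by simp [or_comm]) m Finset.univ.offDiag
    (h.meetsAbove.imp fun ξ η ⟨i, j, hij, hmeets⟩ =>
      ⟨(i, j), by simpa using hij, (i, j), by simp, hmeets⟩)
  refine ⟨l.1, l.2, (Finset.mem_offDiag.mp hl).2.2, T, hTS, hT, hmeets.imp ?_⟩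
  rintro ξ η ⟨p, rfl | rfl, hp⟩
  exacts [Or.inl hp, Or.inr hp]

theorem exists_injective_fin_subset_range {α : Type*} [Fintype α] {n : ℕ} (s : Finset α)
    (hs : s.card ≤ n) (hn : n ≤ Fintype.card α) :
    ∃ c : Fin n → α, c.Injective ∧ ↑s ⊆ Set.range c := by
  classical
  obtain ⟨u, hsu, -, hu⟩ := Finset.exists_subsuperset_card_eq s.subset_univ hs (by simpa using hn)
  set e := u.equivFinOfCardEq hu
  exact ⟨fun i => e.symm i, Subtype.val_injective.comp e.symm.injective,
    fun x hx => ⟨e ⟨x, hsu hx⟩, by simp⟩⟩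

theorem ContainsNLuzinGap.of_ge (hOCA : OCA) {𝒜 : Set (Set ℕ)} {n k : ℕ}
    (h : ContainsNLuzinGap 𝒜 k) (hn : 2 ≤ n) (hnk : n ≤ k) : ContainsNLuzinGap 𝒜 n := by
  obtain ⟨B, m, hB𝒜, hgap⟩ := h.exists_isLuzinGapOn
  obtain ⟨i₀, j₀, hij₀, T, hTS, hT, hmeets⟩ :=
    hgap.exists_pair_pairwise_meetsAbove hOCA not_countable_Iio_omega1
  obtain ⟨c, hc, hrange⟩ := exists_injective_fin_subset_range {i₀, j₀}
    ((Finset.card_le_two).trans hn) (by simpa using hnk)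
  obtain ⟨i, rfl⟩ := hrange (by simp : i₀ ∈ ({i₀, j₀} : Finset (Fin k)))
  obtain ⟨j, rfl⟩ := hrange (by simp : j₀ ∈ ({c i, j₀} : Finset (Fin k)))
  exact containsNLuzinGap_of_isLuzinGapOn hT (fun l ξ hξ => hB𝒜 (c l) ξ (hTS hξ))
    (hgap.comp_of_pairwise hc hTS (hc.ne_iff.mp hij₀) hmeets)

/-- under OCA, for `2 ≤ n < k`, an a.d.-family contains an `n`-Luzin gap
iff it contains a `k`-Luzin gap. -/
theorem statement5 (hOCA : OCA) (𝒜 : Set (Set ℕ)) (h𝒜 : ADFamily 𝒜) (n k : ℕ)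
    (hn : 2 ≤ n) (hnk : n < k) :
    ContainsNLuzinGap 𝒜 n ↔ ContainsNLuzinGap 𝒜 k :=
  ⟨fun h => h.of_le hOCA h𝒜 hnk.le, fun h => h.of_ge hOCA hn hnk.le⟩
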